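/- arXiv:1912.01692 — 4 statements merged into one kernel-verified Lean document; each statement's English description precedes it below -/
import Mathlib

section
/- Let G be a non-abelian finite simple group. Then there exist two non-empty collections A and B of proper subgroups of G such that: (1) every subgroup in A is a maximal subgroup of G; (2) for every b ∈ B there are at least two distinct subgroups a₁, a₂ ∈ A with b ≤ a₁ and b ≤ a₂; (3) for every a ∈ A there are at least two distinct subgroups b₁, b₂ ∈ B with b₁ ≤ a and b₂ ≤ a; (4) the cardinality of every b ∈ B equals the maximal cardinality of an intersection M₁ ∩ M₂ of two distinct maximal subgroups M₁, M₂ of G. -/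
open Pointwise MulAction

set_option linter.unusedSectionVars false
set_option maxHeartbeats 1000000

section CrownHelpers

variable {G : Type} [Group G]


private lemma smul_eq_iff_mem_norm (g : ConjAct G) (M : Subgroup G) :
    g • M = M ↔ ConjAct.ofConjAct g ∈ (Subgroup.normalizer (M : Set G)) := by
  constructor
  · intro h
    rw [Subgroup.mem_normalizer_iff]
    intro k
    refine ⟨fun hk => ?_, fun hk => ?_⟩
    · have : g • k ∈ g • M := Subgroup.smul_mem_pointwise_smul k g M hk
      rw [h] at this
      simpa [ConjAct.smul_def] using this
    · have : g • k ∈ M := by simpa [ConjAct.smul_def] using hk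
      rwa [← h, Subgroup.smul_mem_pointwise_smul_iff] at this
  · intro h
    ext y
    rw [Subgroup.mem_pointwise_smul_iff_inv_smul_mem]
    refine ⟨fun hk => ?_, fun hy => ?_⟩
    · have := (Subgroup.mem_normalizer_iff.mp h (g⁻¹ • y)).mp hk
      simpa [ConjAct.smul_def, mul_assoc] using this
    · have := (Subgroup.mem_normalizer_iff.mp ((Subgroup.normalizer (M : Set G)).inv_mem h) y).mp hy
      simpa [ConjAct.smul_def, mul_assoc] using this

private lemma card_smul (g : ConjAct G) (M : Subgroup G) :
    Nat.card (g • M : Subgroup G) = Nat.card M :=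
  Nat.card_congr (Subgroup.equivSMul g M).toEquiv.symm

private lemma isCoatom_smul {M : Subgroup G} (h : IsCoatom M) (g : ConjAct G) :
    IsCoatom (g • M) := by
  constructor
  · intro htop
    apply h.1
    have := congrArg (fun N => g⁻¹ • N) htop
    simpa [inv_smul_smul] using this.trans (by ext y; simp [Subgroup.mem_pointwise_smul_iff_inv_smul_mem])
  · intro x hx
    have hlt : M < g⁻¹ • x := by
      rw [lt_iff_le_not_ge] at hx ⊢
      constructor
      · rw [← Subgroup.pointwise_smul_le_pointwise_smul_iff (a := g⁻¹)] at hx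
        simpa [inv_smul_smul] using hx.1
      · intro hle
        rw [← Subgroup.pointwise_smul_le_pointwise_smul_iff (a := g)] at hle
        simp only [smul_inv_smul] at hle
        exact hx.2 hle
    have := h.2 _ hlt
    have := congrArg (fun N => g • N) this
    simp only [smul_inv_smul] at this
    rw [this]
    ext y; simp [Subgroup.mem_pointwise_smul_iff_inv_smul_mem]

private lemma eq_of_le_card [Finite G] {H K : Subgroup G} (h : H ≤ K)
    (hc : Nat.card K ≤ Nat.card H) : H = K :=
  SetLike.coe_injective <| Set.eq_of_subset_of_ncard_le h
    (by simpa [← Nat.card_coe_set_eq] using hc) (Set.toFinite _)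

private lemma orbit_ncard_mul [Finite G] (M : Subgroup G) (hN : (Subgroup.normalizer (M : Set G)) = M) :
    (orbit (ConjAct G) M).ncard * Nat.card M = Nat.card G := by
  have hstab : Nat.card (stabilizer (ConjAct G) M) = Nat.card (Subgroup.normalizer (M : Set G)) :=
    Nat.card_congr (Equiv.subtypeEquiv ConjAct.ofConjAct.toEquiv
      (fun x => mem_stabilizer_iff.trans (smul_eq_iff_mem_norm x M)))
  have h1 := Subgroup.card_mul_index (stabilizer (ConjAct G) M)
  rw [MulAction.index_stabilizer, hstab, hN] at h1
  rw [mul_comm] at h1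
  rw [h1]
  exact Nat.card_congr ConjAct.ofConjAct.toEquiv

section Simple
variable [Finite G] [IsSimpleGroup G] (hna : ¬ ∀ a b : G, a * b = b * a)
include hna

omit [Finite G] [IsSimpleGroup G] in
private lemma zpowers_ne_top (x : G) : Subgroup.zpowers x ≠ ⊤ := by
  intro h
  apply hna
  intro a b
  obtain ⟨m, hm⟩ := Subgroup.mem_zpowers_iff.mp (h ▸ Subgroup.mem_top a)
  obtain ⟨n, hn⟩ := Subgroup.mem_zpowers_iff.mp (h ▸ Subgroup.mem_top b)
  rw [← hm, ← hn, ← zpow_add, ← zpow_add, add_comm]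

private lemma coatom_ne_bot {M : Subgroup G} (h : IsCoatom M) : M ≠ ⊥ := by
  rintro rfl
  have hna' := hna
  push_neg at hna'
  obtain ⟨a, b, hab⟩ := hna'
  have ha : a ≠ 1 := by rintro rfl; simp at hab
  have h1 : (⊥ : Subgroup G) < Subgroup.zpowers a := by
    rw [bot_lt_iff_ne_bot, ne_eq, Subgroup.zpowers_eq_bot]
    exact ha
  exact zpowers_ne_top hna a (h.2 _ h1)

private lemma coatom_not_normal {M : Subgroup G} (h : IsCoatom M) : ¬ M.Normal := by
  intro hn
  rcases hn.eq_bot_or_eq_top with h1 | h1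
  · exact coatom_ne_bot hna h h1
  · exact h.1 h1

private lemma normalizer_coatom {M : Subgroup G} (h : IsCoatom M) : (Subgroup.normalizer (M : Set G)) = M := by
  by_contra hne
  have hlt : M < (Subgroup.normalizer (M : Set G)) := lt_of_le_of_ne Subgroup.le_normalizer (Ne.symm hne)
  exact coatom_not_normal hna h (Subgroup.normalizer_eq_top_iff.mp (h.2 _ hlt))

private lemma exists_inf_ne_bot :
    ∃ M₁ M₂ : Subgroup G, IsCoatom M₁ ∧ IsCoatom M₂ ∧ M₁ ≠ M₂ ∧ M₁ ⊓ M₂ ≠ ⊥ := by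
  by_contra hcon
  have htriv : ∀ M₁ M₂ : Subgroup G, IsCoatom M₁ → IsCoatom M₂ → M₁ ≠ M₂ → M₁ ⊓ M₂ = ⊥ := by
    intro M₁ M₂ h1 h2 hne
    by_contra h
    exact hcon ⟨M₁, M₂, h1, h2, hne, h⟩
  classical
  haveI : Fintype G := Fintype.ofFinite G
  haveI : Fintype (Subgroup G) := Fintype.ofFinite _
  have hnt : Nontrivial G := by
    rcases subsingleton_or_nontrivial G with h | h
    · exact absurd (fun a b => Subsingleton.elim _ _) hna
    · exact h
  -- the finset of all coatoms
  set 𝓜 : Finset (Subgroup G) := Finset.univ.filter IsCoatom with h𝓜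
  set f : Subgroup G → Finset G := fun M => (M : Set G).toFinset.erase 1 with hf
  have hfcard : ∀ M : Subgroup G, (f M).card = Nat.card M - 1 := by
    intro M
    have h1 : (1 : G) ∈ (M : Set G).toFinset := by
      rw [Set.mem_toFinset]; exact M.one_mem
    have h2 : Fintype.card ((M : Set G)) = Nat.card M := by
      rw [← Nat.card_eq_fintype_card]; rfl
    rw [hf]
    rw [Finset.card_erase_of_mem h1, Set.toFinset_card, h2]
  have hcover : 𝓜.biUnion f = Finset.univ.erase 1 := by
    ext x
    constructor
    · intro hx
      obtain ⟨M, hM, hxM⟩ := Finset.mem_biUnion.mp hx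
      exact Finset.mem_erase.mpr ⟨(Finset.mem_erase.mp hxM).1, Finset.mem_univ x⟩
    · intro hx
      have hx1 : x ≠ 1 := (Finset.mem_erase.mp hx).1
      rcases eq_top_or_exists_le_coatom (Subgroup.zpowers x) with h | ⟨M, hM, hle⟩
      · exact absurd h (zpowers_ne_top hna x)
      · refine Finset.mem_biUnion.mpr ⟨M, Finset.mem_filter.mpr ⟨Finset.mem_univ M, hM⟩, ?_⟩
        exact Finset.mem_erase.mpr ⟨hx1, Set.mem_toFinset.mpr (hle (Subgroup.mem_zpowers x))⟩
  have hdisj : ∀ M₁ ∈ 𝓜, ∀ M₂ ∈ 𝓜, M₁ ≠ M₂ → Disjoint (f M₁) (f M₂) := by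
    intro M₁ hM₁ M₂ hM₂ hne
    rw [Finset.disjoint_left]
    intro x hx1 hx2
    simp only [hf, Finset.mem_erase, Set.mem_toFinset, SetLike.mem_coe] at hx1 hx2
    have : x ∈ M₁ ⊓ M₂ := ⟨hx1.2, hx2.2⟩
    rw [htriv M₁ M₂ (Finset.mem_filter.mp hM₁).2 (Finset.mem_filter.mp hM₂).2 hne] at this
    exact hx1.1 (Subgroup.mem_bot.mp this)
  have hsum : ∑ M ∈ 𝓜, ((Nat.card M : ℕ) - 1) = Nat.card G - 1 := by
    calc ∑ M ∈ 𝓜, ((Nat.card M : ℕ) - 1) = ∑ M ∈ 𝓜, (f M).card := by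
          exact Finset.sum_congr rfl fun M _ => (hfcard M).symm
      _ = (𝓜.biUnion f).card := (Finset.card_biUnion hdisj).symm
      _ = (Finset.univ.erase (1 : G)).card := by rw [hcover]
      _ = Nat.card G - 1 := by
          rw [Finset.card_erase_of_mem (Finset.mem_univ 1), Finset.card_univ,
            Nat.card_eq_fintype_card]
  -- orbit facts
  have horbsub : ∀ M : Subgroup G, IsCoatom M →
      (Set.toFinite (orbit (ConjAct G) M)).toFinset ⊆ 𝓜 := by
    intro M hM N hN
    rw [Set.Finite.mem_toFinset] at hN
    obtain ⟨g, rfl⟩ := hN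
    exact Finset.mem_filter.mpr ⟨Finset.mem_univ _, isCoatom_smul hM g⟩
  have horbsum : ∀ M : Subgroup G, IsCoatom M →
      ∑ N ∈ (Set.toFinite (orbit (ConjAct G) M)).toFinset, ((Nat.card N : ℕ) - 1)
        = (orbit (ConjAct G) M).ncard * (Nat.card M - 1) := by
    intro M hM
    rw [Finset.sum_congr rfl (fun N hN => ?_), Finset.sum_const, smul_eq_mul,
      Set.ncard_eq_toFinset_card (orbit (ConjAct G) M)]
    rw [Set.Finite.mem_toFinset] at hN
    obtain ⟨g, rfl⟩ := hN
    rw [card_smul]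
  have hM₀ : ∃ M : Subgroup G, IsCoatom M := by
    rcases eq_top_or_exists_le_coatom (⊥ : Subgroup G) with h | ⟨M, hM, -⟩
    · exfalso
      have hall : ∀ x : G, x = 1 := fun x => Subgroup.mem_bot.mp (h ▸ Subgroup.mem_top x)
      obtain ⟨x, y, hxy⟩ := hnt
      exact hxy ((hall x).trans (hall y).symm)
    · exact ⟨M, hM⟩
  obtain ⟨M₀, hM₀⟩ := hM₀
  have hcard2 : ∀ M : Subgroup G, IsCoatom M → 2 ≤ Nat.card M := by
    intro M hM
    have h1 : Nat.card M ≠ 1 := fun h => coatom_ne_bot hna hM (Subgroup.card_eq_one.mp h)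
    have h0 : 0 < Nat.card M := Nat.card_pos
    omega
  have key : ∀ M : Subgroup G, IsCoatom M →
      (orbit (ConjAct G) M).ncard * Nat.card M = Nat.card G :=
    fun M hM => orbit_ncard_mul M (normalizer_coatom hna hM)
  set O₀ := (Set.toFinite (orbit (ConjAct G) M₀)).toFinset with hO₀
  have hGpos : 1 ≤ Nat.card G := Nat.card_pos
  by_cases hOeq : O₀ = 𝓜
  · -- single orbit
    have h1 : (orbit (ConjAct G) M₀).ncard * (Nat.card M₀ - 1) = Nat.card G - 1 := by
      rw [← hsum, ← hOeq, horbsum M₀ hM₀]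
    have h2 := key M₀ hM₀
    have h3 := hcard2 M₀ hM₀
    have hi : 1 ≤ (orbit (ConjAct G) M₀).ncard := by
      have hmem : M₀ ∈ orbit (ConjAct G) M₀ := mem_orbit_self M₀
      have := (Set.ncard_pos (Set.toFinite (orbit (ConjAct G) M₀))).mpr ⟨M₀, hmem⟩
      omega
    -- from i * m = n and i * (m-1) = n - 1, m ≥ 2: i*m - i = n-1 = i*m - 1 so i = 1, then m = n
    have hmn : Nat.card M₀ = Nat.card G := by
      set i := (orbit (ConjAct G) M₀).ncard
      set m := Nat.card M₀
      obtain ⟨j, hj⟩ : ∃ j, m = j + 2 := ⟨m - 2, by omega⟩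
      rw [hj] at h1 h2
      have e1 : i * (j + 2) = i * j + 2 * i := by ring
      have e2 : i * (j + 2 - 1) = i * j + i := by
        have hj1 : j + 2 - 1 = j + 1 := rfl
        rw [hj1]; ring
      rw [e2] at h1
      rw [e1] at h2
      have hi1 : i = 1 := by omega
      rw [hi1] at h2
      rw [hj]
      omega
    exact hM₀.1 (Subgroup.eq_top_of_card_eq M₀ hmn)
  · -- at least two orbits
    have hssub : O₀ ⊆ 𝓜 := horbsub M₀ hM₀
    obtain ⟨M₁, hM₁mem, hM₁notin⟩ : ∃ M₁ ∈ 𝓜, M₁ ∉ O₀ := by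
      by_contra h
      push_neg at h
      exact hOeq (Finset.Subset.antisymm hssub h)
    have hM₁ : IsCoatom M₁ := (Finset.mem_filter.mp hM₁mem).2
    set O₁ := (Set.toFinite (orbit (ConjAct G) M₁)).toFinset with hO₁
    have hdisjO : Disjoint O₀ O₁ := by
      rw [Finset.disjoint_left]
      intro N hN0 hN1
      rw [hO₀, Set.Finite.mem_toFinset] at hN0
      rw [hO₁, Set.Finite.mem_toFinset] at hN1
      apply hM₁notin
      rw [hO₀, Set.Finite.mem_toFinset]
      rw [← orbit_eq_iff] at hN0 hN1
      rw [← hN0, hN1]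
      exact mem_orbit_self M₁
    have hsub : O₀ ∪ O₁ ⊆ 𝓜 := Finset.union_subset hssub (horbsub M₁ hM₁)
    have hge : ∑ M ∈ 𝓜, ((Nat.card M : ℕ) - 1) ≥
        (orbit (ConjAct G) M₀).ncard * (Nat.card M₀ - 1)
          + (orbit (ConjAct G) M₁).ncard * (Nat.card M₁ - 1) := by
      rw [← horbsum M₀ hM₀, ← horbsum M₁ hM₁, ← Finset.sum_union hdisjO]
      exact Finset.sum_le_sum_of_subset hsub
    have k0 := key M₀ hM₀
    have k1 := key M₁ hM₁
    have c0 := hcard2 M₀ hM₀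
    have c1 := hcard2 M₁ hM₁
    rw [hsum] at hge
    set i0 := (orbit (ConjAct G) M₀).ncard
    set i1 := (orbit (ConjAct G) M₁).ncard
    set m0 := Nat.card M₀
    set m1 := Nat.card M₁
    obtain ⟨j0, hj0⟩ : ∃ j, m0 = j + 2 := ⟨m0 - 2, by omega⟩
    obtain ⟨j1, hj1⟩ : ∃ j, m1 = j + 2 := ⟨m1 - 2, by omega⟩
    rw [hj0] at k0 hge
    rw [hj1] at k1 hge
    have e0 : i0 * (j0 + 2) = i0 * j0 + 2 * i0 := by ring
    have e1 : i1 * (j1 + 2) = i1 * j1 + 2 * i1 := by ring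
    have e0' : i0 * (j0 + 2 - 1) = i0 * j0 + i0 := by
      have h : j0 + 2 - 1 = j0 + 1 := rfl
      rw [h]; ring
    have e1' : i1 * (j1 + 2 - 1) = i1 * j1 + i1 := by
      have h : j1 + 2 - 1 = j1 + 1 := rfl
      rw [h]; ring
    rw [e0] at k0
    rw [e1] at k1
    rw [e0', e1'] at hge
    omega


end Simple

end CrownHelpers

/-- **Proposition.** Let `G` be a non-abelian finite simple group.  Then the lattice of proper
subgroups of `G` contains two non-empty collections of subgroups `A` and `B` such that:
(1) all subgroups in `A` are maximal;
(2) every `b ∈ B` is contained in at least two distinct subgroups from `A`;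
(3) every `a ∈ A` contains at least two distinct subgroups from `B`;
(4) the cardinality of every `b ∈ B` is the maximal cardinality of an intersection of two
distinct maximal subgroups of `G`. -/

theorem exists_crown_collections (G : Type) [Group G] [Finite G] [IsSimpleGroup G]
    (hna : ¬ ∀ a b : G, a * b = b * a) :
    ∃ A B : Set (Subgroup G), A.Nonempty ∧ B.Nonempty ∧
      (∀ a ∈ A, IsCoatom a) ∧
      (∀ b ∈ B, ∃ a₁ ∈ A, ∃ a₂ ∈ A, a₁ ≠ a₂ ∧ b ≤ a₁ ∧ b ≤ a₂) ∧
      (∀ a ∈ A, ∃ b₁ ∈ B, ∃ b₂ ∈ B, b₁ ≠ b₂ ∧ b₁ ≤ a ∧ b₂ ≤ a) ∧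
      (∀ b ∈ B, IsGreatest
        {n : ℕ | ∃ M₁ M₂ : Subgroup G, IsCoatom M₁ ∧ IsCoatom M₂ ∧ M₁ ≠ M₂ ∧
          n = Nat.card (M₁ ⊓ M₂ : Subgroup G)}
        (Nat.card b)) := by
  classical
  set S : Set ℕ := {n : ℕ | ∃ M₁ M₂ : Subgroup G, IsCoatom M₁ ∧ IsCoatom M₂ ∧ M₁ ≠ M₂ ∧
      n = Nat.card (M₁ ⊓ M₂ : Subgroup G)} with hS
  obtain ⟨M₁, M₂, hM₁, hM₂, hMne, hMinf⟩ := exists_inf_ne_bot hna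
  have hSne : S.Nonempty := ⟨Nat.card (M₁ ⊓ M₂ : Subgroup G), M₁, M₂, hM₁, hM₂, hMne, rfl⟩
  have hSbdd : BddAbove S := by
    refine ⟨Nat.card G, ?_⟩
    rintro n ⟨N₁, N₂, -, -, -, rfl⟩
    exact Subgroup.card_le_card_group _
  have hSmem : sSup S ∈ S := Nat.sSup_mem hSne hSbdd
  have hub : ∀ k ∈ S, k ≤ sSup S := fun k hk => le_csSup hSbdd hk
  have hsup2 : 2 ≤ sSup S := by
    have hmem : Nat.card (M₁ ⊓ M₂ : Subgroup G) ∈ S := ⟨M₁, M₂, hM₁, hM₂, hMne, rfl⟩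
    have hp : 0 < Nat.card (M₁ ⊓ M₂ : Subgroup G) := Nat.card_pos
    have h1 : Nat.card (M₁ ⊓ M₂ : Subgroup G) ≠ 1 := fun h => hMinf (Subgroup.card_eq_one.mp h)
    have := hub _ hmem
    omega
  set B : Set (Subgroup G) := {b : Subgroup G | Nat.card b = sSup S ∧
    ∃ N₁ N₂ : Subgroup G, IsCoatom N₁ ∧ IsCoatom N₂ ∧ N₁ ≠ N₂ ∧ b ≤ N₁ ∧ b ≤ N₂} with hB
  have hBnorm : ∀ b ∈ B, (Subgroup.normalizer (b : Set G)) ≠ ⊤ := by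
    rintro b ⟨hcard, N₁, N₂, h1, h2, hne, hb1, hb2⟩ htop
    have hnormal : b.Normal := Subgroup.normalizer_eq_top_iff.mp htop
    rcases hnormal.eq_bot_or_eq_top with h | h
    · rw [h, Subgroup.card_bot] at hcard
      omega
    · rw [h] at hb1
      exact h1.1 (top_le_iff.mp hb1)
  have hBconj : ∀ b ∈ B, ∀ g : ConjAct G, g • b ∈ B := by
    rintro b ⟨hcard, N₁, N₂, hc1, hc2, hne, hb1, hb2⟩ g
    refine ⟨(card_smul g b).trans hcard, g • N₁, g • N₂, isCoatom_smul hc1 g,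
      isCoatom_smul hc2 g, fun h => hne (MulAction.injective g h), ?_, ?_⟩
    · exact Subgroup.pointwise_smul_le_pointwise_smul_iff.mpr hb1
    · exact Subgroup.pointwise_smul_le_pointwise_smul_iff.mpr hb2
  have hkey : ∀ b ∈ B, ∃ a₁ a₂ : Subgroup G, IsCoatom a₁ ∧ IsCoatom a₂ ∧ a₁ ≠ a₂ ∧
      b ≤ a₁ ∧ b ≤ a₂ ∧ ¬ a₁ ≤ (Subgroup.normalizer (b : Set G)) ∧ ¬ a₂ ≤ (Subgroup.normalizer (b : Set G)) := by
    intro b hb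
    obtain ⟨hcard, N₁, N₂, hc1, hc2, hne, hb1, hb2⟩ := hb
    have hN : (Subgroup.normalizer (b : Set G)) ≠ ⊤ := hBnorm b ⟨hcard, N₁, N₂, hc1, hc2, hne, hb1, hb2⟩
    have hcoeq : ∀ M : Subgroup G, IsCoatom M → M ≤ (Subgroup.normalizer (b : Set G)) → M = (Subgroup.normalizer (b : Set G)) := by
      intro M hM hle
      rcases lt_or_eq_of_le hle with h | h
      · exact absurd (hM.2 _ h) hN
      · exact h
    have aux : ∀ P Q : Subgroup G, IsCoatom P → IsCoatom Q → P ≠ Q → b ≤ P → b ≤ Q →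
        P ≤ (Subgroup.normalizer (b : Set G)) → ∃ a₁ a₂ : Subgroup G, IsCoatom a₁ ∧ IsCoatom a₂ ∧ a₁ ≠ a₂ ∧
        b ≤ a₁ ∧ b ≤ a₂ ∧ ¬ a₁ ≤ (Subgroup.normalizer (b : Set G)) ∧ ¬ a₂ ≤ (Subgroup.normalizer (b : Set G)) := by
      intro P Q hP hQ hPQ hbP hbQ hPn
      have hPeq : P = (Subgroup.normalizer (b : Set G)) := hcoeq P hP hPn
      have hQn : ¬ Q ≤ (Subgroup.normalizer (b : Set G)) := fun h => hPQ (hPeq.trans (hcoeq Q hQ h).symm)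
      have hinfS : Nat.card (P ⊓ Q : Subgroup G) ∈ S := ⟨P, Q, hP, hQ, hPQ, rfl⟩
      have hble : b ≤ P ⊓ Q := le_inf hbP hbQ
      have hinfb : P ⊓ Q = b :=
        (eq_of_le_card hble (by rw [hcard]; exact hub _ hinfS)).symm
      have hbP' : b ≠ P := by
        rintro rfl
        exact hQ.1 (hP.2 _ (lt_of_le_of_ne hbQ hPQ))
      obtain ⟨x, hxP, hxb⟩ := SetLike.exists_of_lt (lt_of_le_of_ne hbP hbP')
      set g : ConjAct G := ConjAct.toConjAct x with hg
      have hgnorm : ConjAct.ofConjAct g ∈ (Subgroup.normalizer (b : Set G)) := by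
        rw [hg, ConjAct.ofConjAct_toConjAct, ← hPeq]
        exact hxP
      have hgb : g • b = b := (smul_eq_iff_mem_norm g b).mpr hgnorm
      refine ⟨Q, g • Q, hQ, isCoatom_smul hQ g, ?_, hbQ, ?_, hQn, ?_⟩
      · intro h
        have hx : ConjAct.ofConjAct g ∈ (Subgroup.normalizer (Q : Set G)) := (smul_eq_iff_mem_norm g Q).mp h.symm
        rw [normalizer_coatom hna hQ, hg, ConjAct.ofConjAct_toConjAct] at hx
        have : x ∈ P ⊓ Q := ⟨hxP, hx⟩
        rw [hinfb] at this
        exact hxb this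
      · calc b = g • b := hgb.symm
          _ ≤ g • Q := Subgroup.pointwise_smul_le_pointwise_smul_iff.mpr hbQ
      · intro h
        have h1 : g • Q = (Subgroup.normalizer (b : Set G)) := hcoeq _ (isCoatom_smul hQ g) h
        have h2 : g • P = P := by
          apply (smul_eq_iff_mem_norm g P).mpr
          rw [hg, ConjAct.ofConjAct_toConjAct]
          exact Subgroup.le_normalizer hxP
        have h3 : g • Q = g • P := by rw [h1, h2]; exact hPeq.symm
        exact hPQ (MulAction.injective g h3).symm
    by_cases h1 : N₁ ≤ (Subgroup.normalizer (b : Set G))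
    · exact aux N₁ N₂ hc1 hc2 hne hb1 hb2 h1
    · by_cases h2 : N₂ ≤ (Subgroup.normalizer (b : Set G))
      · obtain ⟨a₁, a₂, u1, u2, u3, u4, u5, u6, u7⟩ :=
          aux N₂ N₁ hc2 hc1 hne.symm hb2 hb1 h2
        exact ⟨a₁, a₂, u1, u2, u3, u4, u5, u6, u7⟩
      · exact ⟨N₁, N₂, hc1, hc2, hne, hb1, hb2, h1, h2⟩
  set A : Set (Subgroup G) := {a : Subgroup G | IsCoatom a ∧
    ∃ b ∈ B, b ≤ a ∧ ¬ a ≤ (Subgroup.normalizer (b : Set G))} with hA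
  obtain ⟨P, Q, hP, hQ, hPQ, hPQcard⟩ := hSmem
  have hb₀ : (P ⊓ Q : Subgroup G) ∈ B :=
    ⟨hPQcard.symm, P, Q, hP, hQ, hPQ, inf_le_left, inf_le_right⟩
  refine ⟨A, B, ?_, ⟨P ⊓ Q, hb₀⟩, ?_, ?_, ?_, ?_⟩
  · obtain ⟨a₁, a₂, ha₁, ha₂, hne12, hba1, hba2, hn1, hn2⟩ := hkey _ hb₀
    exact ⟨a₁, ha₁, P ⊓ Q, hb₀, hba1, hn1⟩
  · rintro a ⟨ha, -⟩
    exact ha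
  · intro b hb
    obtain ⟨a₁, a₂, ha₁, ha₂, hne12, hba1, hba2, hn1, hn2⟩ := hkey b hb
    exact ⟨a₁, ⟨ha₁, b, hb, hba1, hn1⟩, a₂, ⟨ha₂, b, hb, hba2, hn2⟩, hne12, hba1, hba2⟩
  · rintro a ⟨ha, b, hbB, hba, hnb⟩
    obtain ⟨x, hxa, hxn⟩ := SetLike.not_le_iff_exists.mp hnb
    set g : ConjAct G := ConjAct.toConjAct x with hg
    have hga : g • a = a := by
      apply (smul_eq_iff_mem_norm g a).mpr
      rw [hg, ConjAct.ofConjAct_toConjAct]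
      exact Subgroup.le_normalizer hxa
    have hgbB : g • b ∈ B := hBconj b hbB g
    have hgba : g • b ≤ a := by
      calc g • b ≤ g • a := Subgroup.pointwise_smul_le_pointwise_smul_iff.mpr hba
        _ = a := hga
    have hgbne : b ≠ g • b := by
      intro h
      apply hxn
      have := (smul_eq_iff_mem_norm g b).mp h.symm
      rwa [hg, ConjAct.ofConjAct_toConjAct] at this
    exact ⟨b, hbB, g • b, hgbB, hgbne, hba, hgba⟩
  · intro b hb
    obtain ⟨hcard, -⟩ := hb
    rw [hcard]
    exact ⟨Nat.sSup_mem hSne hSbdd, fun k hk => le_csSup hSbdd hk⟩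
end

section
/- Let G be a finite group acting by automorphisms on a torsion-free group π. Then the family 𝒢 of subgroups of the semidirect product π⋊G that are conjugate to a subgroup of 1×G equals the family of all finite subgroups of π⋊G if and only if, for every subgroup H ≤ G, every 1-cocycle φ : H → π is principal (i.e., H¹(H; π) = {1} for all H ≤ G). -/
/-!
A subgroup `K` of `π ⋊ G` on which the projection to `G` is injective is the graph
`{(c g, g) | g ∈ H}` of a 1-cocycle `c` on its image `H`, and `K` is conjugate into `1 × G`
exactly when `c` is principal. Subgroups conjugate into `1 × G` are such graphs and are finite
because `G` is; conversely, since `π` is torsion-free, a finite subgroup meets `π` trivially,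
so it is such a graph.
-/

/-- The family `𝒢` of subgroups of the semidirect product `π ⋊[φ] G` consisting of the
subgroups which are conjugate (in `π ⋊[φ] G`) to a subgroup of the canonical copy
`1 × G` of `G`. -/
def subConjFamily {π G : Type} [Group π] [Group G] (φ : G →* MulAut π) :
    Set (Subgroup (π ⋊[φ] G)) :=
  {K : Subgroup (π ⋊[φ] G) | ∃ x : π ⋊[φ] G,
    Subgroup.map (MulAut.conj x).toMonoidHom K ≤
      (SemidirectProduct.inr : G →* π ⋊[φ] G).range}

namespace SemidirectProduct

variable {π G : Type*} [Group π] [Group G] {φ : G →* MulAut π}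

theorem mem_range_inr_iff {y : π ⋊[φ] G} : y ∈ (inr : G →* π ⋊[φ] G).range ↔ y.left = 1 := by
  refine ⟨?_, fun h => ⟨y.right, ?_⟩⟩
  · rintro ⟨g, rfl⟩
    rfl
  · ext <;> simp [h]

theorem conj_mem_range_inr_iff (x k : π ⋊[φ] G) :
    x * k * x⁻¹ ∈ (inr : G →* π ⋊[φ] G).range ↔
      k.left = x⁻¹.left * (φ k.right x⁻¹.left)⁻¹ := by
  obtain ⟨y, hy⟩ := (φ x.right).surjective x.left
  simp only [mem_range_inr_iff, mul_left, inv_left, inv_inv, ← hy, map_inv, mul_right, map_mul,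
    MulAut.inv_apply, MulEquiv.symm_apply_apply, MulAut.mul_apply]
  rw [← map_inv, ← map_mul, ← map_mul, map_eq_one_iff _ (φ x.right).injective, mul_inv_eq_one,
    eq_inv_mul_iff_mul_eq]

def cocycleGraph {H : Subgroup G} (c : H → π) (hc : ∀ g h : H, c (g * h) = c g * φ g (c h)) :
    H →* π ⋊[φ] G :=
  MonoidHom.mk' (fun g => ⟨c g, g⟩) fun g h => SemidirectProduct.ext (hc g h) rfl

theorem exists_cocycleGraph_range_eq {K : Subgroup (π ⋊[φ] G)}
    (hK : Function.Injective (rightHom.comp K.subtype)) :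
    ∃ (H : Subgroup G) (c : H → π) (hc : ∀ g h : H, c (g * h) = c g * φ g (c h)),
      (cocycleGraph c hc).range = K := by
  set e := MonoidHom.ofInjective hK
  have right_symm_apply (g : (rightHom.comp K.subtype).range) : (e.symm g : π ⋊[φ] G).right = g :=
    congrArg Subtype.val (e.apply_symm_apply g)
  set c := fun g => (e.symm g : π ⋊[φ] G).left
  have hc (g h) : c (g * h) = c g * φ g (c h) := by
    simp only [c, map_mul, Subgroup.coe_mul, mul_left, right_symm_apply]
  have graph_eq : cocycleGraph c hc = K.subtype.comp e.symm.toMonoidHom :=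
    MonoidHom.ext fun g => SemidirectProduct.ext rfl (right_symm_apply g).symm
  refine ⟨_, c, hc, ?_⟩
  rw [graph_eq, MonoidHom.range_comp, MonoidHom.range_eq_top.2 e.symm.surjective,
    ← MonoidHom.range_eq_map, Subgroup.range_subtype]

theorem injective_rightHom_comp_subtype_of_finite (htf : ∀ a : π, a ≠ 1 → ¬ IsOfFinOrder a)
    (K : Subgroup (π ⋊[φ] G)) [Finite K] : Function.Injective (rightHom.comp K.subtype) := by
  refine (injective_iff_map_eq_one _).2 fun k hk => ?_
  have hk_inl : (k : π ⋊[φ] G) = inl (k : π ⋊[φ] G).left := SemidirectProduct.ext rfl hk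
  have : IsOfFinOrder (inl (k : π ⋊[φ] G).left : π ⋊[φ] G) := by
    rw [← hk_inl]
    exact K.subtype.isOfFinOrder (isOfFinOrder_of_finite k)
  have hleft : (k : π ⋊[φ] G).left = 1 :=
    not_not.1 fun hne => htf _ hne (inl_injective.isOfFinOrder_iff.1 this)
  exact Subtype.ext (by rw [hk_inl, hleft, map_one, Subgroup.coe_one])

end SemidirectProduct

open SemidirectProduct

variable {π G : Type} [Group π] [Group G] {φ : G →* MulAut π}

theorem mem_subConjFamily_iff {K : Subgroup (π ⋊[φ] G)} :
    K ∈ subConjFamily φ ↔ ∃ α : π, ∀ k ∈ K, k.left = α * (φ k.right α)⁻¹ := by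
  constructor
  · rintro ⟨x, hx⟩
    exact ⟨x⁻¹.left, fun k hk => (conj_mem_range_inr_iff x k).1 (hx ⟨k, hk, rfl⟩)⟩
  · rintro ⟨α, hα⟩
    refine ⟨(inl α)⁻¹, Subgroup.map_le_iff_le_comap.2 fun k hk => ?_⟩
    rw [Subgroup.mem_comap, MulEquiv.coe_toMonoidHom, MulAut.conj_apply, conj_mem_range_inr_iff,
      inv_inv, left_inl]
    exact hα k hk

theorem range_cocycleGraph_mem_subConjFamily_iff {H : Subgroup G} (c : H → π)
    (hc : ∀ g h : H, c (g * h) = c g * φ g (c h)) :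
    (cocycleGraph c hc).range ∈ subConjFamily φ ↔ ∃ α : π, ∀ g : H, c g = α * (φ g α)⁻¹ := by
  rw [mem_subConjFamily_iff]
  exact exists_congr fun α => ⟨fun h g => h _ ⟨g, rfl⟩, by rintro h _ ⟨g, rfl⟩; exact h g⟩

theorem finite_of_mem_subConjFamily [Finite G] {K : Subgroup (π ⋊[φ] G)}
    (hK : K ∈ subConjFamily φ) : Finite K := by
  obtain ⟨α, hα⟩ := mem_subConjFamily_iff.1 hK
  refine Finite.of_injective (fun k : K => (k : π ⋊[φ] G).right) fun k₁ k₂ h => ?_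
  replace h : (k₁ : π ⋊[φ] G).right = (k₂ : π ⋊[φ] G).right := h
  exact Subtype.ext (SemidirectProduct.ext (by rw [hα _ k₁.2, hα _ k₂.2, h]) h)

/-- **Proposition.** Let `G` be a finite group acting by automorphisms (via `φ`) on a
torsion-free group `π`.  Then `𝒢` equals the family of all finite subgroups of `π ⋊ G`
if and only if, for every subgroup `H ≤ G`, every `1`-cocycle `c : H → π`
(i.e. `c (g h) = c g • (g • c h)`) is principal (i.e. `c g = α * (g • α)⁻¹` for some fixed
`α ∈ π`); that is, iff `H¹(H; π) = {1}` for all `H ≤ G`. -/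
theorem subConjFamily_eq_finite_iff_H1_trivial (π G : Type) [Group π] [Group G] [Finite G]
    (φ : G →* MulAut π) (htf : ∀ a : π, a ≠ 1 → ¬ IsOfFinOrder a) :
    (∀ K : Subgroup (π ⋊[φ] G), K ∈ subConjFamily φ ↔ Finite K) ↔
    (∀ H : Subgroup G, ∀ c : H → π,
      (∀ g h : H, c (g * h) = c g * φ (g : G) (c h)) →
      ∃ α : π, ∀ g : H, c g = α * (φ (g : G) α)⁻¹) := by
  refine ⟨fun hfam H c hc => ?_, fun hH1 K => ⟨finite_of_mem_subConjFamily, fun _ => ?_⟩⟩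
  · have : Finite (cocycleGraph c hc).range :=
      Finite.of_surjective _ (cocycleGraph c hc).rangeRestrict_surjective
    exact (range_cocycleGraph_mem_subConjFamily_iff c hc).1 ((hfam _).2 this)
  · obtain ⟨H, c, hc, rfl⟩ :=
      exists_cocycleGraph_range_eq (injective_rightHom_comp_subtype_of_finite htf K)
    exact (range_cocycleGraph_mem_subConjFamily_iff c hc).2 (hH1 H c hc)
end

section
/- Let Γ be a group and 𝓕 a family of subgroups of Γ. Let A_𝓕(Γ) denote the poset of all subgroups of Γ belonging to 𝓕, ordered by inclusion and regarded as a small category. Then cd(A_𝓕(Γ)) ≤ cd_𝓕(Γ). -/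
open CategoryTheory

/-- A family of subgroups of a group `Γ`: a nonempty collection of subgroups which is closed
under conjugation and under passing to subgroups. -/
structure IsFamilyOfSubgroups {Γ : Type} [Group Γ] (F : Set (Subgroup Γ)) : Prop where
  nonempty : F.Nonempty
  conj_mem : ∀ H ∈ F, ∀ g : Γ, Subgroup.map (MulAut.conj g).toMonoidHom H ∈ F
  le_mem : ∀ H ∈ F, ∀ K : Subgroup Γ, K ≤ H → K ∈ F

/-- Objects of the orbit category `O_F Γ`: the subgroups belonging to `F`, with the object
`H` standing for the left coset space `Γ/H`. -/
structure OrbitCat (Γ : Type) [Group Γ] (F : Set (Subgroup Γ)) : Type where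
  grp : Subgroup Γ
  mem : grp ∈ F

/-- The orbit category `O_F Γ`: morphisms `Γ/H → Γ/K` are the `Γ`-equivariant maps of left
coset spaces. -/
instance OrbitCat.category {Γ : Type} [Group Γ] {F : Set (Subgroup Γ)} :
    Category (OrbitCat Γ F) where
  Hom A B := (Γ ⧸ A.grp) →[Γ] (Γ ⧸ B.grp)
  id _ := MulActionHom.id Γ
  comp f g := g.comp f
  id_comp f := MulActionHom.comp_id f
  comp_id f := MulActionHom.id_comp f
  assoc _ _ _ := rfl

/-- The constant (contravariant) module `ℤ̲` on a small category `C`, an object of the abelian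
category of `C`-modules, i.e. of contravariant functors from `C` to abelian groups. -/
noncomputable def constZ (C : Type) [SmallCategory C] : Cᵒᵖ ⥤ AddCommGrpCat :=
  (Functor.const Cᵒᵖ).obj (AddCommGrpCat.of ℤ)

/-- `cdLE C n` says that the cohomological dimension of the small category `C` is at most `n`:
the constant `C`-module `ℤ̲` admits a projective resolution of length at most `n` in the
abelian category of contravariant functors from `C` to abelian groups.  The cohomological
dimension of `C` is the projective dimension of `ℤ̲`, i.e. the least such `n`. -/
def cdLE (C : Type) [SmallCategory C] (n : ℕ) : Prop :=
  ∃ P : ProjectiveResolution (constZ C), ∀ m : ℕ, n < m → Limits.IsZero (P.complex.X m)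

/-- `familyCdLE Γ F n` says that the Bredon cohomological dimension `cd_F(Γ)` of `Γ` with
respect to the family `F`, i.e. the projective dimension of `ℤ̲` in the category of
`O_F Γ`-modules, is at most `n`. -/
abbrev familyCdLE (Γ : Type) [Group Γ] (F : Set (Subgroup Γ)) (n : ℕ) : Prop :=
  cdLE (OrbitCat Γ F) n


namespace CdProof

variable {Γ : Type} [Group Γ] {F : Set (Subgroup Γ)}

abbrev Pc (Γ : Type) [Group Γ] (F : Set (Subgroup Γ)) : Type := {H : Subgroup Γ // H ∈ F}

/-- conjugate subgroup `gKg⁻¹` -/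
abbrev cj (g : Γ) (K : Subgroup Γ) : Subgroup Γ := Subgroup.map (MulAut.conj g).toMonoidHom K

lemma mem_cj {g x : Γ} {K : Subgroup Γ} : x ∈ cj g K ↔ g⁻¹ * x * g ∈ K := by
  rw [cj, Subgroup.mem_map_equiv]
  simp [MulAut.conj]

lemma cj_self {k : Γ} {K : Subgroup Γ} (hk : k ∈ K) : cj k K = K := by
  ext x
  rw [mem_cj]
  constructor
  · intro h
    have := K.mul_mem (K.mul_mem hk h) (K.inv_mem hk)
    simpa [mul_assoc] using this
  · intro h
    have := K.mul_mem (K.mul_mem (K.inv_mem hk) h) hk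
    simpa [mul_assoc] using this

/-- The map `Γ⧸H → Γ⧸K`, `xH ↦ xgK`, defined when `g⁻¹Hg ≤ K`. -/
def transFun {H K : Subgroup Γ} (g : Γ) (h : ∀ x ∈ H, g⁻¹ * x * g ∈ K) :
    Γ ⧸ H → Γ ⧸ K :=
  Quotient.map' (· * g) (fun a b hab => by
      rw [QuotientGroup.leftRel_apply] at *
      have := h _ hab
      simpa [mul_assoc] using this)

@[simp] lemma transFun_mk {H K : Subgroup Γ} (g : Γ) (h : ∀ x ∈ H, g⁻¹ * x * g ∈ K) (a : Γ) :
    transFun g h (QuotientGroup.mk a) = QuotientGroup.mk (a * g) := rfl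

/-- The `Γ`-map `Γ⧸H → Γ⧸K`, `xH ↦ xgK`, defined when `g⁻¹Hg ≤ K`. -/
def transMap {H K : Subgroup Γ} (g : Γ) (h : ∀ x ∈ H, g⁻¹ * x * g ∈ K) :
    (Γ ⧸ H) →[Γ] (Γ ⧸ K) where
  toFun := transFun g h
  map_smul' γ x := by
    induction x using QuotientGroup.induction_on with
    | H a =>
      rw [MulAction.Quotient.smul_mk, transFun_mk, transFun_mk, MulAction.Quotient.smul_mk]
      simp [smul_eq_mul, mul_assoc]

@[simp] lemma transMap_mk {H K : Subgroup Γ} (g : Γ) (h : ∀ x ∈ H, g⁻¹ * x * g ∈ K) (a : Γ) :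
    transMap g h (QuotientGroup.mk a) = QuotientGroup.mk (a * g) := rfl

instance {A B : OrbitCat Γ F} : FunLike (A ⟶ B) (Γ ⧸ A.grp) (Γ ⧸ B.grp) :=
  inferInstanceAs (FunLike ((Γ ⧸ A.grp) →[Γ] (Γ ⧸ B.grp)) _ _)

@[simp] lemma hom_transMap_mk {A B : OrbitCat Γ F} (g : Γ)
    (h : ∀ x ∈ A.grp, g⁻¹ * x * g ∈ B.grp) (a : Γ) :
    (show A ⟶ B from transMap g h) (QuotientGroup.mk a) = QuotientGroup.mk (a * g) := rfl

@[simp] lemma orbit_comp_apply {A B C : OrbitCat Γ F} (f : A ⟶ B) (g : B ⟶ C)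
    (x : Γ ⧸ A.grp) : (f ≫ g) x = g (f x) := rfl

@[simp] lemma orbit_id_apply {A : OrbitCat Γ F} (x : Γ ⧸ A.grp) : (𝟙 A : A ⟶ A) x = x := rfl

lemma orbit_hom_ext {A B : OrbitCat Γ F} (f g : A ⟶ B)
    (h : ∀ a : Γ, f (QuotientGroup.mk a) = g (QuotientGroup.mk a)) : f = g := by
  apply DFunLike.ext
  intro x
  induction x using QuotientGroup.induction_on with
  | H a => exact h a

/-- equivariance at the level of cosets -/
lemma orbit_map_smul {A B : OrbitCat Γ F} (f : A ⟶ B) (a : Γ) (x : Γ ⧸ A.grp) :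
    f (a • x) = a • f x := (f : (Γ ⧸ A.grp) →[Γ] (Γ ⧸ B.grp)).map_smul' a x

/-- the inclusion functor from the poset into the orbit category -/
def iota : Pc Γ F ⥤ OrbitCat Γ F where
  obj p := ⟨p.1, p.2⟩
  map {p q} f := transMap 1 (fun x hx => by
    simpa using (leOfHom f : p.1 ≤ q.1) hx)
  map_id p := by
    apply orbit_hom_ext; intro a
    rw [hom_transMap_mk, orbit_id_apply, mul_one]
  map_comp f g := by
    apply orbit_hom_ext; intro a
    rw [hom_transMap_mk, orbit_comp_apply, hom_transMap_mk, hom_transMap_mk]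
    simp

@[simp] lemma iota_map_mk {p q : Pc Γ F} (f : p ⟶ q) (a : Γ) :
    (iota.map f) (QuotientGroup.mk a) = (QuotientGroup.mk a : Γ ⧸ (iota.obj q).grp) := by
  rw [show iota.map f = (transMap 1 (fun x hx => by
    simp only [inv_one, one_mul, mul_one]; exact (leOfHom f : p.1 ≤ q.1) hx) : iota.obj p ⟶ iota.obj q) from rfl,
    hom_transMap_mk, mul_one]

end CdProof

namespace CdProof

variable {Γ : Type} [Group Γ] {F : Set (Subgroup Γ)}

/-- the coset `⟦out c⟧ = c` -/
lemma mk_out (K : Subgroup Γ) (c : Γ ⧸ K) : (QuotientGroup.mk c.out : Γ ⧸ K) = c :=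
  Quotient.out_eq' c

variable (hF : IsFamilyOfSubgroups F)

/-- the conjugate subgroup attached to a coset, via a choice of representative -/
noncomputable def sigma (o : OrbitCat Γ F) (c : Γ ⧸ o.grp) : Pc Γ F :=
  ⟨cj c.out o.grp, hF.conj_mem _ o.mem _⟩

/-- the canonical `Γ`-map `Γ⧸(out c)K(out c)⁻¹ → Γ⧸K`. -/
noncomputable def tmap (o : OrbitCat Γ F) (c : Γ ⧸ o.grp) : iota.obj (sigma hF o c) ⟶ o :=
  transMap c.out (fun x hx => mem_cj.mp hx)

@[simp] lemma tmap_mk (o : OrbitCat Γ F) (c : Γ ⧸ o.grp) (a : Γ) :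
    (tmap hF o c) (QuotientGroup.mk a) = (QuotientGroup.mk (a * c.out) : Γ ⧸ o.grp) := rfl

lemma tmap_one (o : OrbitCat Γ F) (c : Γ ⧸ o.grp) :
    (tmap hF o c) (QuotientGroup.mk 1) = c := by
  rw [tmap_mk, one_mul, mk_out]

/-- Lemma A : compatibility of σ with morphisms. -/
lemma sigma_le {o' o : OrbitCat Γ F} (f : o' ⟶ o) (c : Γ ⧸ o'.grp) :
    sigma hF o' c ≤ sigma hF o (f c) := by
  intro x hx
  set h := c.out with hh
  set u := (f c).out with hu
  -- hx : x ∈ cj h o'.grp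
  rw [show sigma hF o' c = ⟨cj h o'.grp, _⟩ from rfl] at hx
  have hy : h⁻¹ * x * h ∈ o'.grp := mem_cj.mp hx
  -- f ⟦h * (h⁻¹ x h)⟧ = f ⟦h⟧
  have e1 : (QuotientGroup.mk (h * (h⁻¹ * x * h)) : Γ ⧸ o'.grp) = QuotientGroup.mk h := by
    rw [QuotientGroup.eq]
    group
    simpa [mul_assoc] using o'.grp.inv_mem hy
  have e2 : f (QuotientGroup.mk (h * (h⁻¹ * x * h))) = f (QuotientGroup.mk h) := by rw [e1]
  have e3 : (QuotientGroup.mk h : Γ ⧸ o'.grp) = c := mk_out _ _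
  have e4 : f (QuotientGroup.mk h) = QuotientGroup.mk u := by rw [e3, ← mk_out o.grp (f c)]
  have e5 : (QuotientGroup.mk (h * (h⁻¹ * x * h)) : Γ ⧸ o'.grp) = x • QuotientGroup.mk h := by
    rw [MulAction.Quotient.smul_mk, smul_eq_mul]
    congr 1
    group
  have e6 : f (QuotientGroup.mk (h * (h⁻¹ * x * h))) = x • QuotientGroup.mk u := by
    rw [e5, orbit_map_smul, e4]
  have e7 : (x • QuotientGroup.mk u : Γ ⧸ o.grp) = QuotientGroup.mk u := by
    rw [← e6, e2, e4]
  rw [MulAction.Quotient.smul_mk, QuotientGroup.eq] at e7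
  rw [show sigma hF o (f c) = ⟨cj u o.grp, _⟩ from rfl]
  show x ∈ cj u o.grp
  rw [mem_cj]
  have := o.grp.inv_mem e7
  simpa [mul_assoc, smul_eq_mul] using this

/-- Lemma B : the key commuting square in the orbit category. -/
lemma tmap_natural {o' o : OrbitCat Γ F} (f : o' ⟶ o) (c : Γ ⧸ o'.grp) :
    tmap hF o' c ≫ f = iota.map (homOfLE (sigma_le hF f c)) ≫ tmap hF o (f c) := by
  apply orbit_hom_ext
  intro a
  rw [orbit_comp_apply, orbit_comp_apply, iota_map_mk, tmap_mk, tmap_mk]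
  -- goal : f ⟦a * c.out⟧ = ⟦a * (f c).out⟧
  have e1 : (QuotientGroup.mk (a * c.out) : Γ ⧸ o'.grp) = a • QuotientGroup.mk c.out := by
    rw [MulAction.Quotient.smul_mk]; rfl
  set u := (f c).out with hu
  have hu' : (QuotientGroup.mk u : Γ ⧸ o.grp) = f c := mk_out _ _
  rw [e1, orbit_map_smul, mk_out, ← hu', MulAction.Quotient.smul_mk, smul_eq_mul]

/-- `σ` at the trivial coset of `ι p` is `p` itself. -/
lemma sigma_one (p : Pc Γ F) :
    sigma hF (iota.obj p) (QuotientGroup.mk 1) = p := by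
  have hu : ((QuotientGroup.mk 1 : Γ ⧸ (iota.obj p).grp)).out ∈ p.1 := by
    have := mk_out (iota.obj p).grp (QuotientGroup.mk 1)
    rw [QuotientGroup.eq] at this
    change _ ∈ p.1 at this
    simpa using p.1.inv_mem (by simpa using this)
  exact Subtype.ext (cj_self hu)

/-- Lemma C : the retraction identity. -/
lemma iota_tmap_id (p : Pc Γ F) :
    iota.map (homOfLE (le_of_eq (sigma_one hF p).symm)) ≫
      tmap hF (iota.obj p) (QuotientGroup.mk 1) = 𝟙 (iota.obj p) := by
  apply orbit_hom_ext
  intro a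
  rw [orbit_comp_apply, iota_map_mk, tmap_mk, orbit_id_apply, QuotientGroup.eq]
  have hu : ((QuotientGroup.mk 1 : Γ ⧸ (iota.obj p).grp)).out ∈ p.1 := by
    have := mk_out (iota.obj p).grp (QuotientGroup.mk 1)
    rw [QuotientGroup.eq] at this
    change _ ∈ p.1 at this
    simpa using p.1.inv_mem (by simpa using this)
  show _ ∈ p.1
  simpa [mul_assoc] using p.1.inv_mem hu

end CdProof

namespace CdProof

open Opposite

variable {Γ : Type} [Group Γ] {F : Set (Subgroup Γ)}

/-- morphisms of `AddCommGrpCat.{0}` from additive maps -/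
abbrev phom {A B : AddCommGrpCat.{0}} (f : A → B) (hf : ∀ x y, f (x + y) = f x + f y) : A ⟶ B :=
  AddCommGrpCat.ofHom (AddMonoidHom.mk' f hf)

@[simp] lemma phom_apply {A B : AddCommGrpCat.{0}} (f : A → B) (hf) (x : A) : phom f hf x = f x := rfl

lemma pmap_eq (X : (Pc Γ F)ᵒᵖ ⥤ AddCommGrpCat.{0}) {a b : (Pc Γ F)ᵒᵖ} (f g : a ⟶ b) :
    X.map f = X.map g := by
  congr 1
  apply Quiver.Hom.unop_inj
  apply Subsingleton.elim

/-- restriction of modules along `iota` -/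
noncomputable def res : ((OrbitCat Γ F)ᵒᵖ ⥤ AddCommGrpCat.{0}) ⥤ ((Pc Γ F)ᵒᵖ ⥤ AddCommGrpCat.{0}) :=
  (Functor.whiskeringLeft _ _ _).obj (iota (Γ := Γ) (F := F)).op

variable (hF : IsFamilyOfSubgroups F)

/-- the value of the right adjoint (coinduction) on objects -/
noncomputable def RObj (X : (Pc Γ F)ᵒᵖ ⥤ AddCommGrpCat.{0}) : (OrbitCat Γ F)ᵒᵖ ⥤ AddCommGrpCat.{0} where
  obj o := AddCommGrpCat.of (∀ c : Γ ⧸ o.unop.grp, X.obj (op (sigma hF o.unop c)))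
  map {o o'} φ := phom
    (fun x c' => X.map (homOfLE (sigma_le hF φ.unop c')).op (x (φ.unop c')))
    (by intro x y; funext c'; simp)
  map_id o := by
    ext x
    rename_i c
    have h1 : ∀ d : Γ ⧸ o.unop.grp, (𝟙 o).unop d = d := fun d => rfl
    show X.map (homOfLE (sigma_le hF (𝟙 o).unop c)).op (x ((𝟙 o).unop c)) = x c
    rw [pmap_eq X _ (𝟙 (op (sigma hF o.unop c))), X.map_id]
    rfl
  map_comp {o o' o''} φ ψ := by
    ext x
    rename_i c
    show X.map (homOfLE (sigma_le hF (φ ≫ ψ).unop c)).op (x ((φ ≫ ψ).unop c)) =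
      X.map (homOfLE (sigma_le hF ψ.unop c)).op
        ((X.map (homOfLE (sigma_le hF φ.unop (ψ.unop c))).op) (x (φ.unop (ψ.unop c))))
    rw [← comp_apply, ← X.map_comp]
    exact congrArg (fun f : X.obj (op (sigma hF o.unop (φ.unop (ψ.unop c)))) ⟶ X.obj (op (sigma hF o''.unop c)) =>
      (ConcreteCategory.hom f) (x (φ.unop (ψ.unop c)))) (pmap_eq X _ _)

end CdProof

namespace CdProof

open Opposite

variable {Γ : Type} [Group Γ] {F : Set (Subgroup Γ)} (hF : IsFamilyOfSubgroups F)

/-- the right adjoint (coinduction) functor -/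
noncomputable def RR : ((Pc Γ F)ᵒᵖ ⥤ AddCommGrpCat.{0}) ⥤ ((OrbitCat Γ F)ᵒᵖ ⥤ AddCommGrpCat.{0}) where
  obj X := RObj hF X
  map {X Y} e :=
    { app := fun o => phom (fun x c => e.app (op (sigma hF o.unop c)) (x c))
        (by intro x y; funext c; show e.app _ (x c + y c) = _; rw [map_add]; rfl)
      naturality := by
        intro o o' φ
        ext x
        funext c'
        show e.app _ ((RObj hF X).map φ x c') = Y.map (homOfLE (sigma_le hF φ.unop c')).op
          ((e.app (op (sigma hF o.unop (φ.unop c')))) (x (φ.unop c')))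
        show e.app _ (X.map (homOfLE (sigma_le hF φ.unop c')).op (x (φ.unop c'))) = _
        rw [← comp_apply, e.naturality, comp_apply] }
  map_id X := by
    ext o x
    rfl
  map_comp e f := by
    ext o x
    rfl

end CdProof

namespace CdProof

open Opposite

variable {Γ : Type} [Group Γ] {F : Set (Subgroup Γ)} (hF : IsFamilyOfSubgroups F)

lemma pi_collapse (X : (Pc Γ F)ᵒᵖ ⥤ AddCommGrpCat.{0}) {o : OrbitCat Γ F}
    (y : ∀ c : Γ ⧸ o.grp, X.obj (op (sigma hF o c))) {d d' : Γ ⧸ o.grp} (h : d = d')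
    {b : (Pc Γ F)ᵒᵖ} (f : op (sigma hF o d) ⟶ b) (g : op (sigma hF o d') ⟶ b) :
    X.map f (y d) = X.map g (y d') := by
  subst h
  rw [pmap_eq X f g]

/-- unit-direction map of the hom equivalence -/
noncomputable def Phi {M : (OrbitCat Γ F)ᵒᵖ ⥤ AddCommGrpCat.{0}} {X : (Pc Γ F)ᵒᵖ ⥤ AddCommGrpCat.{0}}
    (α : res.obj M ⟶ X) : M ⟶ (RR hF).obj X where
  app o := phom
    (fun m c => α.app (op (sigma hF o.unop c)) (M.map (tmap hF o.unop c).op m))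
    (by
      intro m m'
      funext c
      show α.app _ (M.map (tmap hF o.unop c).op (m + m')) =
        α.app _ (M.map (tmap hF o.unop c).op m) + α.app _ (M.map (tmap hF o.unop c).op m')
      rw [map_add]; exact map_add _ _ _)
  naturality := by
    intro o o' φ
    ext m
    funext c'
    show α.app (op (sigma hF o'.unop c')) (M.map (tmap hF o'.unop c').op (M.map φ m)) =
      X.map (homOfLE (sigma_le hF φ.unop c')).op
        (α.app (op (sigma hF o.unop (φ.unop c'))) (M.map (tmap hF o.unop (φ.unop c')).op m))
    have key : φ ≫ (tmap hF o'.unop c').op =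
        (tmap hF o.unop (φ.unop c')).op ≫ (iota.map (homOfLE (sigma_le hF φ.unop c'))).op := by
      apply Quiver.Hom.unop_inj
      show tmap hF o'.unop c' ≫ φ.unop = iota.map (homOfLE (sigma_le hF φ.unop c')) ≫
        tmap hF o.unop (φ.unop c')
      exact tmap_natural hF φ.unop c'
    have nat := α.naturality (homOfLE (sigma_le hF φ.unop c')).op
    calc α.app (op (sigma hF o'.unop c')) (M.map (tmap hF o'.unop c').op (M.map φ m))
        = α.app (op (sigma hF o'.unop c')) ((M.map φ ≫ M.map (tmap hF o'.unop c').op) m) := by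
          rw [comp_apply]
      _ = α.app (op (sigma hF o'.unop c')) (M.map ((tmap hF o.unop (φ.unop c')).op ≫
            (iota.map (homOfLE (sigma_le hF φ.unop c'))).op) m) := by
          rw [← M.map_comp, key]
      _ = ConcreteCategory.hom ((res.obj M).map (homOfLE (sigma_le hF φ.unop c')).op ≫
            α.app (op (sigma hF o'.unop c')))
            (M.map (tmap hF o.unop (φ.unop c')).op m) := by
          rw [M.map_comp]; rfl
      _ = ConcreteCategory.hom (α.app (op (sigma hF o.unop (φ.unop c'))) ≫
            X.map (homOfLE (sigma_le hF φ.unop c')).op)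
            (M.map (tmap hF o.unop (φ.unop c')).op m) := by rw [nat]
      _ = _ := rfl

/-- counit-direction map of the hom equivalence -/
noncomputable def Psi {M : (OrbitCat Γ F)ᵒᵖ ⥤ AddCommGrpCat.{0}} {X : (Pc Γ F)ᵒᵖ ⥤ AddCommGrpCat.{0}}
    (β : M ⟶ (RR hF).obj X) : res.obj M ⟶ X where
  app p := phom
    (fun m => X.map (homOfLE (le_of_eq (sigma_one hF p.unop).symm)).op
      ((β.app (op (iota.obj p.unop)) m) (QuotientGroup.mk 1)))
    (by
      intro m m'
      show X.map (homOfLE (le_of_eq (sigma_one hF p.unop).symm)).op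
          ((β.app (op (iota.obj p.unop)) (m + m')) (QuotientGroup.mk 1)) = _
      have h2 : β.app (op (iota.obj p.unop)) (m + m') =
        β.app (op (iota.obj p.unop)) m + β.app (op (iota.obj p.unop)) m' := map_add _ _ _
      rw [h2]
      show X.map _ ((β.app (op (iota.obj p.unop)) m) (QuotientGroup.mk 1) +
        (β.app (op (iota.obj p.unop)) m') (QuotientGroup.mk 1)) = _
      rw [map_add])
  naturality := by
    intro p q ψ
    ext m
    funext
    show X.map (homOfLE (le_of_eq (sigma_one hF q.unop).symm)).op
        ((β.app (op (iota.obj q.unop)) (M.map (iota.map ψ.unop).op m)) (QuotientGroup.mk 1)) =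
      X.map ψ (X.map (homOfLE (le_of_eq (sigma_one hF p.unop).symm)).op
        ((β.app (op (iota.obj p.unop)) m) (QuotientGroup.mk 1)))
    have nat := β.naturality (iota.map ψ.unop).op
    have e1 : β.app (op (iota.obj q.unop)) (M.map (iota.map ψ.unop).op m) =
        ((RR hF).obj X).map (iota.map ψ.unop).op (β.app (op (iota.obj p.unop)) m) := by
      exact ConcreteCategory.congr_hom nat m
    rw [e1]
    set y := β.app (op (iota.obj p.unop)) m with hy
    show X.map _ (X.map (homOfLE (sigma_le hF ((iota.map ψ.unop).op).unop (QuotientGroup.mk 1))).op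
        (y ((iota.map ψ.unop) (QuotientGroup.mk 1)))) = _
    rw [← comp_apply, ← comp_apply, ← X.map_comp, ← X.map_comp]
    exact pi_collapse hF X y (iota_map_mk ψ.unop 1) _ _

end CdProof

namespace CdProof

open Opposite

variable {Γ : Type} [Group Γ] {F : Set (Subgroup Γ)} (hF : IsFamilyOfSubgroups F)

lemma Psi_Phi {M : (OrbitCat Γ F)ᵒᵖ ⥤ AddCommGrpCat.{0}} {X : (Pc Γ F)ᵒᵖ ⥤ AddCommGrpCat.{0}}
    (α : res.obj M ⟶ X) : Psi hF (Phi hF α) = α := by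
  ext p m
  show X.map (homOfLE (le_of_eq (sigma_one hF p.unop).symm)).op
      (α.app (op (sigma hF (iota.obj p.unop) (QuotientGroup.mk 1)))
        (M.map (tmap hF (iota.obj p.unop) (QuotientGroup.mk 1)).op m)) = α.app p m
  have nat := α.naturality (homOfLE (le_of_eq (sigma_one hF p.unop).symm)).op
  refine (ConcreteCategory.congr_hom nat.symm
    (M.map (tmap hF (iota.obj p.unop) (QuotientGroup.mk 1)).op m)).trans ?_
  show α.app p (M.map (iota.map (homOfLE (le_of_eq (sigma_one hF p.unop).symm))).op
    (M.map (tmap hF (iota.obj p.unop) (QuotientGroup.mk 1)).op m)) = α.app p m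
  change (M.obj (op (iota.obj p.unop)) : Type) at m
  rw [← comp_apply, ← M.map_comp, ← op_comp, iota_tmap_id]
  show α.app p (M.map (𝟙 (op (iota.obj p.unop))) m) = α.app p m
  rw [M.map_id]
  rfl

lemma Phi_Psi {M : (OrbitCat Γ F)ᵒᵖ ⥤ AddCommGrpCat.{0}} {X : (Pc Γ F)ᵒᵖ ⥤ AddCommGrpCat.{0}}
    (β : M ⟶ (RR hF).obj X) : Phi hF (Psi hF β) = β := by
  ext o m
  funext c
  show X.map (homOfLE (le_of_eq (sigma_one hF (sigma hF o.unop c)).symm)).op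
      ((β.app (op (iota.obj (sigma hF o.unop c))) (M.map (tmap hF o.unop c).op m))
        (QuotientGroup.mk 1)) = (β.app o m) c
  have nat := β.naturality (tmap hF o.unop c).op
  have e1 : β.app (op (iota.obj (sigma hF o.unop c))) (M.map (tmap hF o.unop c).op m) =
      ((RR hF).obj X).map (tmap hF o.unop c).op (β.app o m) := by
    rw [← comp_apply, nat, comp_apply]
  rw [e1]
  set y := β.app o m with hy
  show X.map _ (X.map (homOfLE (sigma_le hF ((tmap hF o.unop c).op).unop (QuotientGroup.mk 1))).op
      (y ((tmap hF o.unop c) (QuotientGroup.mk 1)))) = y c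
  rw [← comp_apply, ← X.map_comp]
  have e2 : y c = X.map (𝟙 (op (sigma hF o.unop c))) (y c) := by rw [X.map_id]; rfl
  rw [e2]
  exact pi_collapse hF X y (tmap_one hF o.unop c) _ _

/-- the adjunction between restriction and coinduction -/
noncomputable def adj : (res : ((OrbitCat Γ F)ᵒᵖ ⥤ AddCommGrpCat.{0}) ⥤ _) ⊣ RR hF :=
  Adjunction.mkOfHomEquiv
    { homEquiv := fun M X =>
        { toFun := Phi hF
          invFun := Psi hF
          left_inv := fun α => Psi_Phi hF α
          right_inv := fun β => Phi_Psi hF β }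
      homEquiv_naturality_left_symm := by
        intro M' M X f g
        ext p m
        rfl
      homEquiv_naturality_right := by
        intro M X X' α g
        ext o m
        rfl }

end CdProof

namespace CdProof

open Opposite Limits

variable {Γ : Type} [Group Γ] {F : Set (Subgroup Γ)} (hF : IsFamilyOfSubgroups F)

lemma RR_preservesEpi : (RR (Γ := Γ) hF).PreservesEpimorphisms := by
  constructor
  intro X Y e he
  rw [NatTrans.epi_iff_epi_app] at he ⊢
  intro o
  rw [AddCommGrpCat.epi_iff_surjective]
  intro y
  have hsurj : ∀ c : Γ ⧸ o.unop.grp,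
      Function.Surjective (e.app (op (sigma hF o.unop c))) := fun c => by
    rw [← AddCommGrpCat.epi_iff_surjective]
    exact he _
  refine ⟨fun c => Function.surjInv (hsurj c) (y c), ?_⟩
  funext c
  exact Function.surjInv_eq (hsurj c) (y c)

lemma res_map_projective (hF : IsFamilyOfSubgroups F)
    (M : (OrbitCat Γ F)ᵒᵖ ⥤ AddCommGrpCat.{0}) (hM : Projective M) :
    Projective ((res (Γ := Γ) (F := F)).obj M) := by
  have := RR_preservesEpi hF
  exact (adj hF).map_projective M hM

end CdProof

namespace CdProof

open Opposite Limits

variable {Γ : Type} [Group Γ] {F : Set (Subgroup Γ)}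

instance res_additive : (res (Γ := Γ) (F := F)).Additive := by
  constructor
  intros X Y f g
  ext p
  rfl

noncomputable instance : PreservesFiniteLimits (res (Γ := Γ) (F := F)) := by
  have : PreservesLimits (res (Γ := Γ) (F := F)) := by
    unfold res; infer_instance
  infer_instance

noncomputable instance : PreservesFiniteColimits (res (Γ := Γ) (F := F)) := by
  have h : PreservesColimitsOfSize.{0,0} (res (Γ := Γ) (F := F)) := by
    unfold res; infer_instance
  exact PreservesColimitsOfSize.preservesFiniteColimits _

/-- the restriction of the constant module is the constant module -/
noncomputable def resConstIso :
    (res (Γ := Γ) (F := F)).obj (constZ (OrbitCat Γ F)) ≅ constZ (Pc Γ F) :=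
  NatIso.ofComponents (fun p => Iso.refl _) (by
    intro p q f
    simp [res, constZ])

end CdProof


/-- **Lemma.** Let `Γ` be a group and `F` a family of subgroups of `Γ`.  Let `A_F(Γ)` be the
poset of all subgroups of `Γ` belonging to `F`, ordered by inclusion and regarded as a small
category.  Then `cd(A_F(Γ)) ≤ cd_F(Γ)`. -/
theorem cd_poset_le_cd_family (Γ : Type) [Group Γ]
    (F : Set (Subgroup Γ)) (hF : IsFamilyOfSubgroups F) :
    ∀ n : ℕ, familyCdLE Γ F n → cdLE {H : Subgroup Γ // H ∈ F} n := by
  intro n hn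
  obtain ⟨P, hP⟩ := hn
  have hiso : IsIso ((HomologicalComplex.singleMapHomologicalComplex
        (CdProof.res (Γ := Γ) (F := F)) (ComplexShape.down ℕ) 0).hom.app
        (constZ (OrbitCat Γ F)) ≫
      ((ChainComplex.single₀ _).mapIso CdProof.resConstIso).hom) := by infer_instance
  haveI hq2 : QuasiIso ((HomologicalComplex.singleMapHomologicalComplex
        (CdProof.res (Γ := Γ) (F := F)) (ComplexShape.down ℕ) 0).hom.app
        (constZ (OrbitCat Γ F)) ≫
      ((ChainComplex.single₀ _).mapIso CdProof.resConstIso).hom) := ⟨fun _ => inferInstance⟩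
  refine ⟨{ complex := ((CdProof.res (Γ := Γ) (F := F)).mapHomologicalComplex
              (ComplexShape.down ℕ)).obj P.complex
            projective := fun m => CdProof.res_map_projective hF _ (P.projective m)
            π := ((CdProof.res (Γ := Γ) (F := F)).mapHomologicalComplex
                (ComplexShape.down ℕ)).map P.π ≫
              ((HomologicalComplex.singleMapHomologicalComplex
                (CdProof.res (Γ := Γ) (F := F)) (ComplexShape.down ℕ) 0).hom.app
                (constZ (OrbitCat Γ F)) ≫
              ((ChainComplex.single₀ _).mapIso CdProof.resConstIso).hom)
            quasiIso := inferInstance }, ?_⟩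
  intro m hm
  exact (CdProof.res (Γ := Γ) (F := F)).map_isZero (hP m hm)
end

section
/- Let G be a non-abelian finite simple group. Then there exist two distinct maximal subgroups H and K of G such that T := H ∩ K is non-trivial, T is not a normal subgroup of H, T is not a normal subgroup of K, and the cardinality of T equals the maximal cardinality of an intersection M₁ ∩ M₂ over all pairs of distinct maximal subgroups M₁, M₂ of G. -/
/-!
A maximal subgroup `M` of a non-abelian simple group `G` is nontrivial and self-normalizing. If
distinct maximal subgroups always met trivially, the conjugates of `M` would contain
`|G| - |G : M| ≥ |G| / 2` nonidentity elements but miss some `x ≠ 1`; a maximal subgroup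
`K ∋ x` is then not conjugate to `M`, and the conjugates of `M` and of `K` together would contain
at least `|G|` nonidentity elements. So we may choose distinct maximal `H`, `K` with
`T = H ⊓ K` nontrivial of largest order. Being nontrivial and proper, `T` is normal in at most
one maximal subgroup, its normalizer. If that is `H`, conjugating `K` by some `h ∈ H \ K` gives a
maximal `K ^ h ≠ K` still containing `T`, so `K ⊓ K ^ h = T` by maximality of `|T|`, and `T` is
normal in neither `K` nor `K ^ h`.
-/

open MulAction Pointwise Subgroup

namespace Subgroup
variable {G : Type*} [Group G]

section PointwiseAction

variable {α : Type*} [Group α] [MulDistribMulAction α G]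

theorem isCoatom_pointwise_smul {K : Subgroup G} (hK : IsCoatom K) (a : α) :
    IsCoatom (a • K) :=
  (OrderIso.isCoatom_iff ⟨MulAction.toPerm a, by simp⟩ K).mpr hK

theorem card_pointwise_smul (a : α) (K : Subgroup G) :
    Nat.card (a • K : Subgroup G) = Nat.card K :=
  Nat.card_congr (equivSMul a K).toEquiv.symm

end PointwiseAction

theorem ncard_orbit_conjAct (M : Subgroup G) :
    (orbit (ConjAct G) M).ncard = (normalizer (M : Set G)).index := by
  have hstab : stabilizer (ConjAct G) M =
      comap (G := ConjAct G) (N := G) ConjAct.ofConjAct.toMonoidHom (normalizer (M : Set G)) := by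
    ext g
    rw [mem_stabilizer_iff, mem_comap, ← conjAct_pointwise_smul_iff]
    rfl
  rw [← index_stabilizer, hstab, index_comap_of_surjective _ ConjAct.ofConjAct.surjective]

theorem disjoint_diff_one_of_inf_eq_bot {A B : Subgroup G} (h : A ⊓ B = ⊥) :
    Disjoint ((A : Set G) \ {1}) ((B : Set G) \ {1}) := by
  rw [Set.disjoint_left]
  rintro x ⟨hxA, hx1⟩ ⟨hxB, -⟩
  exact hx1 (mem_bot.mp (h ▸ mem_inf.mpr ⟨hxA, hxB⟩))

theorem ncard_biUnion_diff_one [Finite G] {𝒮 : Set (Subgroup G)}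
    (h𝒮 : 𝒮.Pairwise fun A B => A ⊓ B = ⊥) :
    (⋃ K ∈ 𝒮, (K : Set G) \ {1}).ncard = ∑ᶠ K ∈ 𝒮, (Nat.card K - 1) := by
  rw [(Set.toFinite 𝒮).ncard_biUnion (fun _ _ => Set.toFinite _)
    fun A hA B hB hAB => disjoint_diff_one_of_inf_eq_bot (h𝒮 hA hB hAB)]
  refine finsum_mem_congr rfl fun K _ => ?_
  rw [Set.ncard_sdiff_singleton_of_mem K.one_mem, ← Nat.card_coe_set_eq]
  rfl

theorem ncard_biUnion_orbit_conjAct_diff_one [Finite G] {M : Subgroup G}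
    (hM : normalizer (M : Set G) = M)
    (hTI : (orbit (ConjAct G) M).Pairwise fun A B => A ⊓ B = ⊥) :
    (⋃ K ∈ orbit (ConjAct G) M, (K : Set G) \ {1}).ncard = Nat.card G - M.index := by
  have hcard : ∀ K ∈ orbit (ConjAct G) M, Nat.card K - 1 = Nat.card M - 1 := by
    rintro _ ⟨g, rfl⟩
    rw [card_pointwise_smul]
  rw [ncard_biUnion_diff_one hTI, finsum_mem_congr rfl hcard,
    finsum_mem_eq_finite_toFinset_sum _ (Set.toFinite _), Finset.sum_const, smul_eq_mul,
    ← Set.ncard_eq_toFinset_card _, ncard_orbit_conjAct, hM, Nat.mul_sub_one, index_mul_card]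

theorem ne_bot_of_isCoatom (hG : ¬ IsCyclic G) {M : Subgroup G} (hM : IsCoatom M) : M ≠ ⊥ := by
  rintro rfl
  obtain ⟨⟨x, _⟩, hx⟩ := (⊤ : Subgroup G).ne_bot_iff_exists_ne_one.mp hM.1.symm
  exact hG (isCyclic_iff_exists_zpowers_eq_top.mpr
    ⟨x, hM.2 _ (zpowers_ne_bot.mpr (by simpa using hx)).bot_lt⟩)

theorem exists_isCoatom_mem [Finite G] (hG : ¬ IsCyclic G) (x : G) :
    ∃ M : Subgroup G, IsCoatom M ∧ x ∈ M := by
  obtain h | ⟨M, hM, hxM⟩ := eq_top_or_exists_le_coatom (zpowers x)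
  · exact (hG (isCyclic_iff_exists_zpowers_eq_top.mpr ⟨x, h⟩)).elim
  · exact ⟨M, hM, hxM (mem_zpowers x)⟩

theorem two_mul_index_le_card [Finite G] {M : Subgroup G} (hM : M ≠ ⊥) :
    2 * M.index ≤ Nat.card G := by
  rw [← M.index_mul_card, mul_comm]
  exact Nat.mul_le_mul_left _ ((one_lt_card_iff_ne_bot M).mpr hM)

theorem exists_isCoatom_inf_ne_bot [Finite G] (hG : ¬ IsCyclic G)
    (hself : ∀ M : Subgroup G, IsCoatom M → normalizer (M : Set G) = M) :
    ∃ M₁ M₂ : Subgroup G, IsCoatom M₁ ∧ IsCoatom M₂ ∧ M₁ ≠ M₂ ∧ M₁ ⊓ M₂ ≠ ⊥ := by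
  by_contra! hTI
  set U : Subgroup G → Set G := fun M => ⋃ K ∈ orbit (ConjAct G) M, (K : Set G) \ {1}
  have hU : ∀ M, IsCoatom M → (U M).ncard = Nat.card G - M.index := fun M hM =>
    ncard_biUnion_orbit_conjAct_diff_one (hself M hM) <| by
      rintro _ ⟨g, rfl⟩ _ ⟨g', rfl⟩
      exact hTI _ _ (isCoatom_pointwise_smul hM g) (isCoatom_pointwise_smul hM g')
  have hindex : ∀ M : Subgroup G, IsCoatom M → 2 ≤ M.index ∧ 2 * M.index ≤ Nat.card G :=
    fun M hM => ⟨one_lt_index_of_ne_top hM.1, two_mul_index_le_card (ne_bot_of_isCoatom hG hM)⟩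
  have hsub : ∀ M, U M ⊆ {1}ᶜ := fun M =>
    Set.iUnion₂_subset fun K _ => Set.sdiff_subset_compl _ _
  have hcompl : ({1}ᶜ : Set G).ncard = Nat.card G - 1 := by
    rw [Set.ncard_compl, Set.ncard_singleton]
  obtain ⟨M, hM, -⟩ := exists_isCoatom_mem hG 1
  obtain ⟨x, hx1, hxM⟩ : ∃ x ∈ ({1}ᶜ : Set G), x ∉ U M := by
    refine Set.exists_mem_notMem_of_ncard_lt_ncard ?_
    have := hindex M hM
    have := hU M hM
    omega
  obtain ⟨K, hK, hxK⟩ := exists_isCoatom_mem hG x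
  have hKM : K ∉ orbit (ConjAct G) M := fun h => hxM (Set.mem_biUnion h ⟨hxK, hx1⟩)
  have hdisj : Disjoint (U M) (U K) := by
    simp only [U, Set.disjoint_iUnion₂_left, Set.disjoint_iUnion₂_right]
    rintro _ ⟨b, rfl⟩ _ ⟨a, rfl⟩
    refine disjoint_diff_one_of_inf_eq_bot <|
      hTI _ _ (isCoatom_pointwise_smul hM a) (isCoatom_pointwise_smul hK b) fun he => hKM ?_
    exact ⟨b⁻¹ * a, by simp only [mul_smul, he, inv_smul_smul]⟩
  have := Set.ncard_le_ncard (Set.union_subset (hsub M) (hsub K))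
  rw [Set.ncard_union_eq hdisj, hU M hM, hU K hK, hcompl] at this
  have := hindex M hM
  have := hindex K hK
  omega

theorem normalizer_eq_of_isCoatom {H T : Subgroup G} (hH : IsCoatom H)
    (hle : H ≤ normalizer (T : Set G)) (hT : ¬ T.Normal) : normalizer (T : Set G) = H :=
  (hH.le_iff.mp hle).resolve_left (normalizer_eq_top_iff.not.mpr hT)

theorem eq_of_normal_subgroupOf_of_normalizer_eq {T H L : Subgroup G} (hL : IsCoatom L)
    (hH : H ≠ ⊤) (hN : normalizer (T : Set G) = H) (hTL : T ≤ L)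
    (hn : (T.subgroupOf L).Normal) : L = H := by
  have hLH : L ≤ H := hN ▸ le_normalizer_of_normal_subgroupOf (hK := hn) hTL
  exact ((hL.le_iff.mp hLH).resolve_left hH).symm

theorem exists_conj_inf_eq_of_normalizer_inf_eq [Finite G] {H K : Subgroup G} (hH : IsCoatom H)
    (hK : IsCoatom K) (hHK : H ≠ K) (hKself : normalizer (K : Set G) = K)
    (hN : normalizer ((H ⊓ K : Subgroup G) : Set G) = H)
    (hmax : ∀ L, IsCoatom L → K ≠ L →
      Nat.card (K ⊓ L : Subgroup G) ≤ Nat.card (H ⊓ K : Subgroup G)) :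
    ∃ K', IsCoatom K' ∧ K ≠ K' ∧ K ⊓ K' = H ⊓ K ∧
      ¬ ((H ⊓ K).subgroupOf K).Normal ∧ ¬ ((H ⊓ K).subgroupOf K').Normal := by
  obtain ⟨h, hhH, hhK⟩ := SetLike.not_le_iff_exists.mp fun hle : H ≤ K =>
    hHK ((hH.le_iff.mp hle).resolve_left hK.1).symm
  set K' := ConjAct.toConjAct h • K
  have hKK' : K ≠ K' := fun he =>
    hhK (hKself ▸ conjAct_pointwise_smul_iff.mp he.symm)
  have hK'H : K' ≠ H := fun he => by
    rw [← conjAct_pointwise_smul_eq_self (le_normalizer hhH)] at he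
    exact hHK (smul_left_cancel _ he).symm
  have hTK' : H ⊓ K ≤ K' :=
    calc H ⊓ K = ConjAct.toConjAct h • (H ⊓ K) :=
          (conjAct_pointwise_smul_eq_self (hN.symm ▸ hhH)).symm
      _ ≤ K' := pointwise_smul_le_pointwise_smul_iff.mpr inf_le_right
  have hK' : IsCoatom K' := isCoatom_pointwise_smul hK _
  have hinf : K ⊓ K' = H ⊓ K :=
    (eq_of_le_of_card_ge (le_inf inf_le_right hTK') (hmax K' hK' hKK')).symm
  refine ⟨K', hK', hKK', hinf, fun hn => ?_, fun hn => ?_⟩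
  · exact hHK (eq_of_normal_subgroupOf_of_normalizer_eq hK hH.1 hN inf_le_right hn).symm
  · exact hK'H (eq_of_normal_subgroupOf_of_normalizer_eq hK' hH.1 hN hTK' hn)

theorem exists_isCoatom_pair_inf_eq_not_normal [Finite G] [IsSimpleGroup G]
    (hself : ∀ M : Subgroup G, IsCoatom M → normalizer (M : Set G) = M)
    {H K : Subgroup G} (hH : IsCoatom H) (hK : IsCoatom K) (hHK : H ≠ K) (hbot : H ⊓ K ≠ ⊥)
    (hmax : ∀ M₁ M₂ : Subgroup G, IsCoatom M₁ → IsCoatom M₂ → M₁ ≠ M₂ →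
      Nat.card (M₁ ⊓ M₂ : Subgroup G) ≤ Nat.card (H ⊓ K : Subgroup G)) :
    ∃ H' K' : Subgroup G, IsCoatom H' ∧ IsCoatom K' ∧ H' ≠ K' ∧ H' ⊓ K' = H ⊓ K ∧
      ¬ ((H ⊓ K).subgroupOf H').Normal ∧ ¬ ((H ⊓ K).subgroupOf K').Normal := by
  have hT : ¬ (H ⊓ K).Normal := fun hn =>
    hn.eq_bot_or_eq_top.elim hbot fun htop => hH.1 (top_le_iff.mp (htop ▸ inf_le_left))
  have hN : ∀ L, IsCoatom L → H ⊓ K ≤ L → ((H ⊓ K).subgroupOf L).Normal →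
      normalizer ((H ⊓ K : Subgroup G) : Set G) = L := fun L hL hle hn =>
    normalizer_eq_of_isCoatom hL (le_normalizer_of_normal_subgroupOf (hK := hn) hle) hT
  by_cases hnH : ((H ⊓ K).subgroupOf H).Normal
  · obtain ⟨K', hK', hKK', hinf, hnK, hnK'⟩ := exists_conj_inf_eq_of_normalizer_inf_eq hH hK hHK
      (hself K hK) (hN H hH inf_le_left hnH) (hmax K · hK)
    exact ⟨K, K', hK, hK', hKK', hinf, hnK, hnK'⟩
  by_cases hnK : ((H ⊓ K).subgroupOf K).Normal
  · rw [inf_comm H K] at hnK hN hmax ⊢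
    obtain ⟨H', hH', hHH', hinf, hnH', hnH''⟩ := exists_conj_inf_eq_of_normalizer_inf_eq hK hH
      hHK.symm (hself H hH) (hN K hK inf_le_left hnK) (hmax H · hH)
    exact ⟨H, H', hH, hH', hHH', hinf, hnH', hnH''⟩
  exact ⟨H, K, hH, hK, hHK, rfl, hnH, hnK⟩

end Subgroup

/-- Let `G` be a non-abelian finite simple group.  Then there are two distinct maximal
subgroups `H` and `K` of `G` such that `T := H ∩ K` is non-trivial, `T` is normal neither in
`H` nor in `K`, and the cardinality of `T` is the maximal cardinality of an intersection of
two distinct maximal subgroups of `G`. -/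
theorem exists_maximal_pair_with_nonnormal_intersection (G : Type) [Group G] [Finite G]
    [IsSimpleGroup G] (hna : ¬ ∀ a b : G, a * b = b * a) :
    ∃ H K : Subgroup G, IsCoatom H ∧ IsCoatom K ∧ H ≠ K ∧
      H ⊓ K ≠ ⊥ ∧
      ¬ ((H ⊓ K).subgroupOf H).Normal ∧
      ¬ ((H ⊓ K).subgroupOf K).Normal ∧
      IsGreatest
        {n : ℕ | ∃ M₁ M₂ : Subgroup G, IsCoatom M₁ ∧ IsCoatom M₂ ∧ M₁ ≠ M₂ ∧
          n = Nat.card (M₁ ⊓ M₂ : Subgroup G)}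
        (Nat.card (H ⊓ K : Subgroup G)) := by
  have hcyc : ¬ IsCyclic G := fun _ => hna IsCyclic.isMulCommutative.is_comm.comm
  have hself : ∀ M : Subgroup G, IsCoatom M → normalizer (M : Set G) = M := fun M hM =>
    normalizer_eq_of_isCoatom hM le_normalizer fun hn =>
      hn.eq_bot_or_eq_top.elim (ne_bot_of_isCoatom hcyc hM) hM.1
  obtain ⟨A, B, hA, hB, hAB, hABbot⟩ := exists_isCoatom_inf_ne_bot hcyc hself
  obtain ⟨⟨H, K⟩, ⟨hH, hK, hHK⟩, hmax⟩ := Set.exists_max_image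
    {p : Subgroup G × Subgroup G | IsCoatom p.1 ∧ IsCoatom p.2 ∧ p.1 ≠ p.2}
    (fun p => Nat.card (p.1 ⊓ p.2 : Subgroup G)) (Set.toFinite _) ⟨(A, B), hA, hB, hAB⟩
  have hmax' : ∀ M₁ M₂ : Subgroup G, IsCoatom M₁ → IsCoatom M₂ → M₁ ≠ M₂ →
      Nat.card (M₁ ⊓ M₂ : Subgroup G) ≤ Nat.card (H ⊓ K : Subgroup G) :=
    fun M₁ M₂ h₁ h₂ h₁₂ => hmax (M₁, M₂) ⟨h₁, h₂, h₁₂⟩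
  have hbot : H ⊓ K ≠ ⊥ := (one_lt_card_iff_ne_bot _).mp <|
    ((one_lt_card_iff_ne_bot _).mpr hABbot).trans_le (hmax' A B hA hB hAB)
  obtain ⟨H', K', hH', hK', hne, hinf, hnH, hnK⟩ :=
    exists_isCoatom_pair_inf_eq_not_normal hself hH hK hHK hbot hmax'
  refine ⟨H', K', hH', hK', hne, ?_⟩
  rw [hinf]
  refine ⟨hbot, hnH, hnK, ⟨H, K, hH, hK, hHK, rfl⟩, ?_⟩
  rintro _ ⟨M₁, M₂, h₁, h₂, h₁₂, rfl⟩
  exact hmax' M₁ M₂ h₁ h₂ h₁₂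
end
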